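/- The square of the massless staggered fermion Hamiltonian is the discrete Laplacian: H_{KS;h}² = ∑_{j=1}^d D^-_{2h;j} D^+_{2h;j} ⊗ I on ℓ²(2hℤ^d) ⊗ ℂ^Λ, i.e., (H_{KS;h}² f)_a(z) = ∑_{j=1}^d (1/(2h)²)(2f_a(z) - f_a(z+2he_j) - f_a(z-2he_j)). -/

import Mathlib

/-!
Write `H_{KS;h} = ∑_j T_j`, where `T_j` hops in direction `j` with sign `(-1)^{s_{j-1}(a)}`.
Since `s_{j-1}` does not see `a_j`, the two signs in `T_j²` cancel and `T_j²` is the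
one-dimensional Laplacian `D^-_{2h;j} D^+_{2h;j} = D^+_{2h;j} D^-_{2h;j}`. For `j ≠ k` the
differences commute, but for `k < j` flipping `a_k` changes the parity of `s_{j-1}(a)` while
flipping `a_j` leaves `s_{k-1}(a)` alone, so `T_j T_k = -T_k T_j` and the cross terms cancel.
-/

noncomputable section

/-- The `j`-th standard basis vector of `ℤ^d`. -/
def e (d : ℕ) (j : Fin d) : Fin d → ℤ := Pi.single j 1

/-- `s_{j-1}(a)` for `a ∈ Λ = {0,1}^d`. -/
def sL (d : ℕ) (j : Fin d) (a : Fin d → Fin 2) : ℕ :=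
  ∑ k ∈ Finset.univ.filter (fun k : Fin d => k < j), (a k : ℕ)

/-- Forward difference `D^+_{2h;j}` on functions on `2hℤ^d` (indexed by `ℤ^d`). -/
def Dp2 (d : ℕ) (h : ℝ) (j : Fin d) (v : (Fin d → ℤ) → ℂ) : (Fin d → ℤ) → ℂ :=
  fun m => (1 / (2 * Complex.I * h)) * (v (m + e d j) - v m)

/-- Backward difference `D^-_{2h;j}` on functions on `2hℤ^d`. -/
def Dm2 (d : ℕ) (h : ℝ) (j : Fin d) (v : (Fin d → ℤ) → ℂ) : (Fin d → ℤ) → ℂ :=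
  fun m => (1 / (2 * Complex.I * h)) * (v m - v (m - e d j))

/-- The massless staggered fermion Hamiltonian `H_{KS;h}` on `ℓ²(2hℤ^d) ⊗ ℂ^Λ`. -/
def HKS (d : ℕ) (h : ℝ) (w : (Fin d → Fin 2) → (Fin d → ℤ) → ℂ) :
    (Fin d → Fin 2) → (Fin d → ℤ) → ℂ :=
  fun a m => ∑ j : Fin d,
    if a j = 1 then
      ((-1 : ℂ) ^ (sL d j a)) * Dp2 d h j (w (Function.update a j 0)) m
    else
      ((-1 : ℂ) ^ (sL d j a)) * Dm2 d h j (w (Function.update a j 1)) m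

open Finset Function

lemma Fin.eq_zero_or_eq_one (x : Fin 2) : x = 0 ∨ x = 1 := by omega

lemma Finset.sum_sum_eq_sum_diag_of_add_swap_eq_zero {ι M : Type*} [Fintype ι] [DecidableEq ι]
    [AddCommMonoid M] (f : ι → ι → M) (hf : ∀ j k, j ≠ k → f j k + f k j = 0) :
    ∑ j, ∑ k, f j k = ∑ j, f j j := by
  have hoff : ∑ j, ∑ k, (if j = k then 0 else f j k) = 0 := by
    rw [← Fintype.sum_prod_type']
    refine sum_ninvolution Prod.swap (fun ⟨j, k⟩ => ?_) (fun ⟨j, k⟩ hne => ?_) (by simp)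
      Prod.swap_swap
    · by_cases hjk : j = k
      · simp [hjk]
      · simp [hjk, Ne.symm hjk, hf j k hjk]
    · by_cases hjk : j = k
      · simp [hjk] at hne
      · simp [Prod.ext_iff, hjk]
  calc ∑ j, ∑ k, f j k
      = ∑ j, ∑ k, ((if j = k then f j k else 0) + (if j = k then 0 else f j k)) := by
        simp only [ite_add_ite, add_zero, zero_add, ite_self]
    _ = ∑ j, f j j := by simp [sum_add_distrib, hoff]

section StaggeredFermion

variable {d : ℕ} (h : ℝ)

def Dpm2 (j : Fin d) (x : Fin 2) : ((Fin d → ℤ) → ℂ) → (Fin d → ℤ) → ℂ :=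
  if x = 1 then Dp2 d h j else Dm2 d h j

lemma Dpm2_zero (j : Fin d) : Dpm2 h j 0 = Dm2 d h j := rfl

lemma Dpm2_one (j : Fin d) : Dpm2 h j 1 = Dp2 d h j := rfl

lemma Dpm2_const_mul (j : Fin d) (x : Fin 2) (c : ℂ) (v : (Fin d → ℤ) → ℂ)
    (m : Fin d → ℤ) :
    Dpm2 h j x (fun z => c * v z) m = c * Dpm2 h j x v m := by
  rcases Fin.eq_zero_or_eq_one x with rfl | rfl <;>
    simp only [Dpm2_zero, Dpm2_one, Dp2, Dm2] <;> ring

lemma Dpm2_sum {ι : Type*} (s : Finset ι) (j : Fin d) (x : Fin 2)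
    (v : ι → (Fin d → ℤ) → ℂ) (m : Fin d → ℤ) :
    Dpm2 h j x (fun z => ∑ k ∈ s, v k z) m = ∑ k ∈ s, Dpm2 h j x (v k) m := by
  rcases Fin.eq_zero_or_eq_one x with rfl | rfl <;>
    simp only [Dpm2_zero, Dpm2_one, Dp2, Dm2, ← mul_sum, sum_sub_distrib]

lemma Dpm2_comm (j k : Fin d) (x y : Fin 2) (v : (Fin d → ℤ) → ℂ) (m : Fin d → ℤ) :
    Dpm2 h j x (Dpm2 h k y v) m = Dpm2 h k y (Dpm2 h j x v) m := by
  rcases Fin.eq_zero_or_eq_one x with rfl | rfl <;>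
    rcases Fin.eq_zero_or_eq_one y with rfl | rfl <;>
    simp only [Dpm2_zero, Dpm2_one, Dp2, Dm2] <;> ring_nf

lemma one_div_two_I_mul_sq : (1 / (2 * Complex.I * h)) ^ 2 = -(1 / (2 * (h : ℂ))) ^ 2 := by
  simp only [div_pow, mul_pow, Complex.I_sq]
  ring

lemma Dpm2_Dpm2_rev (j : Fin d) (x : Fin 2) (v : (Fin d → ℤ) → ℂ) (m : Fin d → ℤ) :
    Dpm2 h j x (Dpm2 h j x.rev v) m
      = (1 / (2 * (h : ℂ))) ^ 2 * (2 * v m - v (m + e d j) - v (m - e d j)) := by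
  rcases Fin.eq_zero_or_eq_one x with rfl | rfl <;>
    simp only [show (0 : Fin 2).rev = 1 from rfl, show (1 : Fin 2).rev = 0 from rfl, Dpm2_zero,
      Dpm2_one, Dp2, Dm2, add_sub_cancel_right, sub_add_cancel] <;>
    linear_combination (v (m + e d j) - 2 * v m + v (m - e d j)) * one_div_two_I_mul_sq h

lemma sL_update_of_le {j k : Fin d} (hjk : j ≤ k) (a : Fin d → Fin 2) (x : Fin 2) :
    sL d j (update a k x) = sL d j a :=
  sum_congr rfl fun i hi => by
    rw [update_of_ne (((mem_filter.mp hi).2.trans_le hjk).ne)]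

lemma sL_update_add_of_lt {j k : Fin d} (hkj : k < j) (a : Fin d → Fin 2) (x : Fin 2) :
    sL d j (update a k x) + a k = sL d j a + x := by
  have hk : k ∈ univ.filter (· < j) := by simp [hkj]
  unfold sL
  rw [← add_sum_erase _ _ hk, ← add_sum_erase _ _ hk,
    sum_congr rfl fun i hi => by rw [update_of_ne (ne_of_mem_erase hi)], update_self]
  ring

lemma neg_one_pow_sL_update_rev_of_lt {j k : Fin d} (hkj : k < j) (a : Fin d → Fin 2) :
    (-1 : ℂ) ^ sL d j (update a k (a k).rev) = -(-1) ^ sL d j a := by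
  have hsum := sL_update_add_of_lt hkj a (a k).rev
  have hrev : ((a k).rev : ℕ) = 1 - a k := by simp [Fin.val_rev]
  have hpar : sL d j (update a k (a k).rev) + 2 * a k = sL d j a + 1 := by omega
  calc (-1 : ℂ) ^ sL d j (update a k (a k).rev)
      = (-1) ^ (sL d j (update a k (a k).rev) + 2 * a k) := by simp [pow_add, pow_mul]
    _ = -(-1) ^ sL d j a := by rw [hpar, pow_succ, mul_neg_one]

def ksTerm (j : Fin d) (w : (Fin d → Fin 2) → (Fin d → ℤ) → ℂ) :
    (Fin d → Fin 2) → (Fin d → ℤ) → ℂ :=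
  fun a m => (-1 : ℂ) ^ sL d j a * Dpm2 h j (a j) (w (update a j (a j).rev)) m

lemma HKS_eq_sum_ksTerm (w : (Fin d → Fin 2) → (Fin d → ℤ) → ℂ) :
    HKS d h w = fun a m => ∑ j, ksTerm h j w a m := by
  funext a m
  refine sum_congr rfl fun j _ => ?_
  rcases Fin.eq_zero_or_eq_one (a j) with ha | ha <;> simp [ksTerm, ha, Dpm2_zero, Dpm2_one]

lemma ksTerm_sum {ι : Type*} (s : Finset ι) (j : Fin d)
    (W : ι → (Fin d → Fin 2) → (Fin d → ℤ) → ℂ) (a : Fin d → Fin 2)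
    (m : Fin d → ℤ) :
    ksTerm h j (fun a m => ∑ k ∈ s, W k a m) a m = ∑ k ∈ s, ksTerm h j (W k) a m := by
  simp only [ksTerm, Dpm2_sum, mul_sum]

lemma ksTerm_ksTerm_self (j : Fin d) (w : (Fin d → Fin 2) → (Fin d → ℤ) → ℂ)
    (a : Fin d → Fin 2) (m : Fin d → ℤ) :
    ksTerm h j (ksTerm h j w) a m
      = (1 / (2 * (h : ℂ))) ^ 2 * (2 * w a m - w a (m + e d j) - w a (m - e d j)) := by
  unfold ksTerm
  rw [sL_update_of_le le_rfl, update_self, update_idem, Fin.rev_rev, update_eq_self,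
    Dpm2_const_mul, Dpm2_Dpm2_rev, ← mul_assoc, ← pow_add, ← two_mul, pow_mul, neg_one_sq,
    one_pow, one_mul]

lemma ksTerm_ksTerm_of_ne {j k : Fin d} (hjk : j ≠ k)
    (w : (Fin d → Fin 2) → (Fin d → ℤ) → ℂ) (a : Fin d → Fin 2) (m : Fin d → ℤ) :
    ksTerm h j (ksTerm h k w) a m
      = (-1 : ℂ) ^ sL d j a * (-1) ^ sL d k (update a j (a j).rev) *
          Dpm2 h j (a j) (Dpm2 h k (a k)
            (w (update (update a j (a j).rev) k (a k).rev))) m := by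
  unfold ksTerm
  rw [update_of_ne hjk.symm, Dpm2_const_mul, mul_assoc]

lemma ksTerm_ksTerm_add_swap {j k : Fin d} (hjk : j ≠ k)
    (w : (Fin d → Fin 2) → (Fin d → ℤ) → ℂ) (a : Fin d → Fin 2) (m : Fin d → ℤ) :
    ksTerm h j (ksTerm h k w) a m + ksTerm h k (ksTerm h j w) a m = 0 := by
  rw [ksTerm_ksTerm_of_ne h hjk, ksTerm_ksTerm_of_ne h hjk.symm, update_comm hjk, Dpm2_comm]
  rcases hjk.lt_or_gt with hlt | hlt <;>
    rw [neg_one_pow_sL_update_rev_of_lt hlt, sL_update_of_le hlt.le] <;> ring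

end StaggeredFermion

theorem stmt16_general (d : ℕ) (h : ℝ)
    (w : (Fin d → Fin 2) → (Fin d → ℤ) → ℂ) (a : Fin d → Fin 2) (m : Fin d → ℤ) :
    HKS d h (HKS d h w) a m
      = ∑ j : Fin d, (1 / (2 * (h : ℂ))) ^ 2 *
          (2 * w a m - w a (m + e d j) - w a (m - e d j)) := by
  simp only [HKS_eq_sum_ksTerm, ksTerm_sum]
  rw [sum_sum_eq_sum_diag_of_add_swap_eq_zero _
    fun j k hjk => ksTerm_ksTerm_add_swap h hjk w a m]
  exact sum_congr rfl fun j _ => ksTerm_ksTerm_self h j w a m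

/-- `H_{KS;h}² = ∑_j D^-_{2h;j} D^+_{2h;j} ⊗ I` is the discrete Laplacian:
`(H_{KS;h}² w)_a(z) = ∑_j (1/(2h))² (2 w_a(z) - w_a(z+2he_j) - w_a(z-2he_j))`. -/
theorem stmt16 (d : ℕ) (hd : 1 ≤ d) (h : ℝ) (hh : 0 < h)
    (w : (Fin d → Fin 2) → (Fin d → ℤ) → ℂ) (a : Fin d → Fin 2) (m : Fin d → ℤ) :
    HKS d h (HKS d h w) a m
      = ∑ j : Fin d, (1 / (2 * (h : ℂ))) ^ 2 *
          (2 * w a m - w a (m + e d j) - w a (m - e d j)) :=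
  stmt16_general d h w a m
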